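/- For positive definite matrices C, D and s, t ∈ [0,1], d(C #_t D, C #_s D) = |t − s| · d(C, D). -/

import Mathlib

open MeasureTheory
open scoped ComplexOrder

abbrev Mat (m : ℕ) := Matrix (Fin m) (Fin m) ℂ

noncomputable instance {m : ℕ} : MeasurableSpace (Mat m) := borel _
instance {m : ℕ} : BorelSpace (Mat m) := ⟨rfl⟩

/-- Functional calculus on Hermitian matrices (junk value `A` otherwise). -/
noncomputable def matFun {m : ℕ} (f : ℝ → ℝ) (A : Mat m) : Mat m :=
  if h : A.IsHermitian then
    (h.eigenvectorUnitary : Mat m) *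
      Matrix.diagonal (fun i => (f (h.eigenvalues i) : ℂ)) *
      star (h.eigenvectorUnitary : Mat m)
  else A

/-- Real power `A^t` of a positive definite matrix, via the spectral decomposition. -/
noncomputable def mpow {m : ℕ} (A : Mat m) (t : ℝ) : Mat m := matFun (fun x => x ^ t) A

/-- Logarithm of a positive definite matrix, via the spectral decomposition. -/
noncomputable def mlog {m : ℕ} (A : Mat m) : Mat m := matFun Real.log A

/-- The operator norm of a matrix (acting on the Euclidean space). -/
noncomputable def opN {m : ℕ} (A : Mat m) : ℝ :=
  ‖(Matrix.toEuclideanCLM (𝕜 := ℂ) A : EuclideanSpace ℂ (Fin m) →L[ℂ] EuclideanSpace ℂ (Fin m))‖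

/-- The Frobenius (Hilbert-Schmidt) norm of a matrix. -/
noncomputable def fnorm {m : ℕ} (A : Mat m) : ℝ :=
  Real.sqrt (∑ i, ∑ j, ‖A i j‖ ^ 2)

/-- The Riemannian trace metric distance `d(A,B) = ‖log (A^{-1/2} B A^{-1/2})‖₂`. -/
noncomputable def rdist {m : ℕ} (A B : Mat m) : ℝ :=
  fnorm (mlog (mpow A (-(1/2 : ℝ)) * B * mpow A (-(1/2 : ℝ))))

/-- The `t`-weighted geometric mean `X #_t A = X^{1/2} (X^{-1/2} A X^{-1/2})^t X^{1/2}`. -/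
noncomputable def geom {m : ℕ} (X : Mat m) (t : ℝ) (A : Mat m) : Mat m :=
  mpow X (1/2 : ℝ) * mpow (mpow X (-(1/2 : ℝ)) * A * mpow X (-(1/2 : ℝ))) t * mpow X (1/2 : ℝ)

/-- Finite first moment for a measure on positive definite matrices. -/
def HasFFM {m : ℕ} (μ : Measure (Mat m)) : Prop :=
  ∃ Y : Mat m, Y.PosDef ∧ Integrable (fun A => rdist A Y) μ

/-- Couplings of two probability measures. -/
def couplings {m : ℕ} (μ ν : Measure (Mat m)) : Set (Measure (Mat m × Mat m)) :=
  {π | IsProbabilityMeasure π ∧ π.map Prod.fst = μ ∧ π.map Prod.snd = ν}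

/-- The 1-Wasserstein distance with respect to the Riemannian trace metric. -/
noncomputable def W1 {m : ℕ} (μ ν : Measure (Mat m)) : ℝ :=
  sInf ((fun π : Measure (Mat m × Mat m) => ∫ p, rdist p.1 p.2 ∂π) '' couplings μ ν)

/-! With `E = A^{-1/2} B A^{-1/2}` the geodesic is `A #_t B = A^{1/2} E^t A^{1/2}`, so
`(A #_t B)⁻¹ (A #_s B)` is similar to `E^{s-t}`. The distance `d(X, Y)` is the `ℓ²`-norm of the
logarithms of the eigenvalues of `X^{-1/2} Y X^{-1/2}`, which only depend on the characteristic
polynomial of `X⁻¹ Y`. If `μᵢ` are the eigenvalues of `E`, then `d(A, B) = ‖(log μᵢ)ᵢ‖` while the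
eigenvalues of `E^{s-t}` are `μᵢ^{s-t}`, with logarithms `(s - t) log μᵢ`. -/

open Matrix Polynomial

section RCLike
variable {𝕜 : Type*} [RCLike 𝕜] {n : Type*} [Fintype n] [DecidableEq n]

theorem Matrix.IsHermitian.sum_comp_eigenvalues_of_charpoly_eq {M : Matrix n n 𝕜}
    (hM : M.IsHermitian) {κ : n → ℝ} (h : M.charpoly = ∏ i, (X - C (κ i : 𝕜))) (g : ℝ → ℝ) :
    ∑ i, g (hM.eigenvalues i) = ∑ i, g (κ i) := by
  have hroots := hM.roots_charpoly_eq_eigenvalues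
  rw [h, roots_prod _ _ (by simp [Finset.prod_ne_zero_iff, X_sub_C_ne_zero])] at hroots
  simp only [roots_X_sub_C, Multiset.bind_singleton] at hroots
  have := congrArg (Multiset.map (fun z : 𝕜 => g (RCLike.re z))) hroots
  simp only [Multiset.map_map, Function.comp_def, RCLike.ofReal_re] at this
  simp only [Finset.sum_eq_multiset_sum, this]

theorem Matrix.continuousOn_real_spectrum (A : Matrix n n 𝕜) (f : ℝ → ℝ) :
    ContinuousOn f (spectrum ℝ A) :=
  A.finite_real_spectrum.continuousOn f

theorem Matrix.PosDef.pos_of_mem_spectrum {A : Matrix n n 𝕜} (hA : A.PosDef) {x : ℝ}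
    (hx : x ∈ spectrum ℝ A) : 0 < x := by
  obtain ⟨i, rfl⟩ := hA.1.spectrum_real_eq_range_eigenvalues ▸ hx
  exact hA.eigenvalues_pos i

theorem Matrix.PosDef.mul_mul_self_of_posDef {B R : Matrix n n 𝕜} (hB : B.PosDef)
    (hR : R.PosDef) : (R * B * R).PosDef := by
  have := (IsUnit.posDef_star_right_conjugate_iff hR.isUnit).mpr hB
  rwa [star_eq_conjTranspose, hR.1.eq] at this

end RCLike

theorem Real.sqrt_sum_log_rpow_sq {ι : Type*} [Fintype ι] {μ : ι → ℝ} (hμ : ∀ i, 0 < μ i)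
    (r : ℝ) : √(∑ i, Real.log (μ i ^ r) ^ 2) = |r| * √(∑ i, Real.log (μ i) ^ 2) := by
  simp_rw [Real.log_rpow (hμ _), mul_pow, ← Finset.mul_sum]
  rw [Real.sqrt_mul (sq_nonneg r), Real.sqrt_sq_eq_abs]

variable {m : ℕ}

theorem matFun_eq_cfc {A : Mat m} (hA : A.IsHermitian) (f : ℝ → ℝ) : matFun f A = cfc f A := by
  rw [hA.cfc_eq, matFun, dif_pos hA]
  rfl

theorem fnorm_eq_sqrt_re_trace (X : Mat m) : fnorm X = √(Xᴴ * X).trace.re := by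
  rw [fnorm, trace, Complex.re_sum, Finset.sum_comm]
  congr 1
  refine Finset.sum_congr rfl fun j _ => ?_
  rw [diag, mul_apply, Complex.re_sum]
  refine Finset.sum_congr rfl fun i _ => ?_
  rw [conjTranspose_apply, Complex.star_def, Complex.conj_mul', ← Complex.ofReal_pow,
    Complex.ofReal_re]

theorem fnorm_conjStarAlgAut (U : unitary (Mat m)) (X : Mat m) :
    fnorm (Unitary.conjStarAlgAut ℂ _ U X) = fnorm X := by
  rw [fnorm_eq_sqrt_re_trace, fnorm_eq_sqrt_re_trace, ← star_eq_conjTranspose, ← map_star,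
    ← map_mul, Unitary.conjStarAlgAut_apply, trace_mul_cycle, Unitary.coe_star_mul_self, one_mul,
    star_eq_conjTranspose]

theorem fnorm_diagonal (d : Fin m → ℂ) : fnorm (diagonal d) = √(∑ i, ‖d i‖ ^ 2) := by
  rw [fnorm]
  congr 1
  refine Finset.sum_congr rfl fun i _ => ?_
  rw [Finset.sum_eq_single i (fun j _ hji => by simp [diagonal_apply_ne' _ hji]) (by simp)]
  simp

theorem fnorm_cfc {A : Mat m} (hA : A.IsHermitian) (f : ℝ → ℝ) :
    fnorm (cfc f A) = √(∑ i, f (hA.eigenvalues i) ^ 2) := by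
  rw [hA.cfc_eq, IsHermitian.cfc, fnorm_conjStarAlgAut, fnorm_diagonal]
  simp

section mpow
variable {A : Mat m}

theorem mpow_eq_cfc (hA : A.IsHermitian) (r : ℝ) : mpow A r = cfc (fun x : ℝ => x ^ r) A :=
  matFun_eq_cfc hA _

theorem isHermitian_mpow (hA : A.IsHermitian) (r : ℝ) : (mpow A r).IsHermitian := by
  rw [mpow_eq_cfc hA]
  exact cfc_predicate _ A

theorem posDef_mpow (hA : A.PosDef) (r : ℝ) : (mpow A r).PosDef := by
  rw [mpow_eq_cfc hA.1, hA.1.cfc_eq, IsHermitian.cfc, Unitary.conjStarAlgAut_apply,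
    IsUnit.posDef_star_right_conjugate_iff Unitary.isUnit_coe, posDef_diagonal_iff]
  intro i
  simpa using Real.rpow_pos_of_pos (hA.eigenvalues_pos i) r

theorem mpow_mul_mpow (hA : A.PosDef) (r s : ℝ) : mpow A r * mpow A s = mpow A (r + s) := by
  rw [mpow_eq_cfc hA.1, mpow_eq_cfc hA.1, mpow_eq_cfc hA.1,
    ← cfc_mul _ _ _ (A.continuousOn_real_spectrum _) (A.continuousOn_real_spectrum _)]
  exact cfc_congr fun x hx => (Real.rpow_add (hA.pos_of_mem_spectrum hx) r s).symm

theorem mpow_zero (hA : A.IsHermitian) : mpow A 0 = 1 := by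
  simp only [mpow_eq_cfc hA, Real.rpow_zero]
  exact cfc_const_one ℝ A hA.isSelfAdjoint

theorem mpow_one (hA : A.IsHermitian) : mpow A 1 = A := by
  simp only [mpow_eq_cfc hA, Real.rpow_one]
  exact cfc_id' ℝ A hA.isSelfAdjoint

theorem mpow_neg_one (hA : A.PosDef) : mpow A (-1) = A⁻¹ := by
  refine (inv_eq_left_inv ?_).symm
  conv_lhs => enter [2]; rw [← mpow_one hA.1]
  rw [mpow_mul_mpow hA, neg_add_cancel, mpow_zero hA.1]

theorem mpow_neg_half_mul_mpow_half (hA : A.PosDef) :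
    mpow A (-(1/2)) * mpow A (1/2) = 1 := by
  rw [mpow_mul_mpow hA]
  norm_num [mpow_zero hA.1]

end mpow

noncomputable def relMat (A B : Mat m) : Mat m := mpow A (-(1/2)) * B * mpow A (-(1/2))

section relMat
variable {A B : Mat m}

theorem isHermitian_relMat (hA : A.IsHermitian) (hB : B.IsHermitian) :
    (relMat A B).IsHermitian := by
  have := isHermitian_conjTranspose_mul_mul (mpow A (-(1/2))) hB
  rwa [(isHermitian_mpow hA _).eq] at this

theorem posDef_relMat (hA : A.PosDef) (hB : B.PosDef) : (relMat A B).PosDef :=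
  hB.mul_mul_self_of_posDef (posDef_mpow hA _)

theorem charpoly_relMat (hA : A.PosDef) : (relMat A B).charpoly = (A⁻¹ * B).charpoly := by
  rw [relMat, mul_assoc, charpoly_mul_comm, mul_assoc, mpow_mul_mpow hA, ← charpoly_mul_comm]
  norm_num [mpow_neg_one hA]

theorem rdist_eq_sqrt_sum_log_sq (h : (relMat A B).IsHermitian) :
    rdist A B = √(∑ i, Real.log (h.eigenvalues i) ^ 2) := by
  change fnorm (matFun Real.log (relMat A B)) = _
  rw [matFun_eq_cfc h, fnorm_cfc h]

theorem rdist_eq_of_charpoly_inv_mul (hA : A.PosDef) (hB : B.IsHermitian) {κ : Fin m → ℝ}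
    (h : (A⁻¹ * B).charpoly = ∏ i, (X - C (κ i : ℂ))) :
    rdist A B = √(∑ i, Real.log (κ i) ^ 2) := by
  have hM := isHermitian_relMat hA.1 hB
  rw [rdist_eq_sqrt_sum_log_sq hM,
    hM.sum_comp_eigenvalues_of_charpoly_eq ((charpoly_relMat hA).trans h) (Real.log · ^ 2)]

theorem geom_eq_mul_mpow_relMat (r : ℝ) :
    geom A r B = mpow A (1/2) * mpow (relMat A B) r * mpow A (1/2) := rfl

theorem posDef_geom (hA : A.PosDef) (hB : B.PosDef) (r : ℝ) : (geom A r B).PosDef :=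
  (posDef_mpow (posDef_relMat hA hB) r).mul_mul_self_of_posDef (posDef_mpow hA _)

theorem inv_geom_mul_geom (hA : A.PosDef) (hB : B.PosDef) (t s : ℝ) :
    (geom A t B)⁻¹ * geom A s B = mpow A (-(1/2)) * mpow (relMat A B) (s - t) * mpow A (1/2) := by
  set R := mpow A (-(1/2))
  set E := relMat A B
  have hE := posDef_relMat hA hB
  have hleft : ∀ r, R * mpow E (-t) * R * geom A r B = R * mpow E (r - t) * mpow A (1/2) := by
    intro r
    calc R * mpow E (-t) * R * geom A r B
        = R * mpow E (-t) * (R * mpow A (1/2)) * mpow E r * mpow A (1/2) := by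
          rw [geom_eq_mul_mpow_relMat]; noncomm_ring
      _ = R * (mpow E (-t) * mpow E r) * mpow A (1/2) := by
          rw [mpow_neg_half_mul_mpow_half hA]; noncomm_ring
      _ = R * mpow E (r - t) * mpow A (1/2) := by rw [mpow_mul_mpow hE, neg_add_eq_sub]
  have hinv : (geom A t B)⁻¹ = R * mpow E (-t) * R := by
    refine inv_eq_left_inv ?_
    rw [hleft, sub_self, mpow_zero hE.1, mul_one, mpow_neg_half_mul_mpow_half hA]
  rw [hinv, hleft]

theorem charpoly_inv_geom_mul_geom (hA : A.PosDef) (hB : B.PosDef) (t s : ℝ) :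
    ((geom A t B)⁻¹ * geom A s B).charpoly = (mpow (relMat A B) (s - t)).charpoly := by
  rw [inv_geom_mul_geom hA hB, charpoly_mul_comm, ← mul_assoc, mpow_mul_mpow hA]
  norm_num [mpow_zero hA.1]

end relMat

theorem stmt8_general {m : ℕ} (C D : Mat m) (hC : C.PosDef) (hD : D.PosDef) (t s : ℝ) :
    rdist (geom C t D) (geom C s D) = |t - s| * rdist C D := by
  have hE := posDef_relMat hC hD
  have hchar : ((geom C t D)⁻¹ * geom C s D).charpoly
      = ∏ i, (X - Polynomial.C ((hE.1.eigenvalues i ^ (s - t) : ℝ) : ℂ)) := by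
    rw [charpoly_inv_geom_mul_geom hC hD, mpow_eq_cfc hE.1, hE.1.charpoly_cfc_eq]
    rfl -- `RCLike.ofReal` and `Complex.ofReal` agree only up to unfolding
  rw [rdist_eq_of_charpoly_inv_mul (posDef_geom hC hD t) (posDef_geom hC hD s).1 hchar,
    rdist_eq_sqrt_sum_log_sq hE.1, Real.sqrt_sum_log_rpow_sq hE.eigenvalues_pos, abs_sub_comm]

/-- Geodesic speed identity: `d(C #_t D, C #_s D) = |t-s| d(C,D)` for `s, t ∈ [0,1]`. -/
theorem stmt8 {m : ℕ} (C D : Mat m) (hC : C.PosDef) (hD : D.PosDef) (t s : ℝ)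
    (ht : t ∈ Set.Icc (0:ℝ) 1) (hs : s ∈ Set.Icc (0:ℝ) 1) :
    rdist (geom C t D) (geom C s D) = |t - s| * rdist C D :=
  stmt8_general C D hC hD t s
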